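/- arXiv:2108.07734 — 2 statements merged into one kernel-verified Lean document; each statement's English description precedes it below -/
import Mathlib

section
/- Let G be a multigraph edge-coloured with n colours such that each colour class is a disjoint union of non-trivial cliques spanning at least 2n + 2m vertices in total, and such that every edge of G has multiplicity at most m. Then G contains a matching of size n (not necessarily rainbow). -/
open Finset
open scoped Classical

section Defs

variable {V C E : Type*}

/-- The two endpoints of an edge of a multigraph given by endpoint functions `e₁ e₂`. -/
def edgeEnds [DecidableEq V] (e₁ e₂ : E → V) (e : E) : Finset V := {e₁ e, e₂ e}

/-- A finite set of edges is a matching: all edges are non-loops and pairwise vertex-disjoint. -/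
def IsMatchingE [DecidableEq V] (e₁ e₂ : E → V) (M : Finset E) : Prop :=
  (∀ e ∈ M, e₁ e ≠ e₂ e) ∧
  ∀ a ∈ M, ∀ b ∈ M, a ≠ b → Disjoint (edgeEnds e₁ e₂ a) (edgeEnds e₁ e₂ b)

/-- A set of edges is rainbow: all its edges have pairwise distinct colours. -/
def IsRainbow (col : E → C) (M : Finset E) : Prop := Set.InjOn col ↑M

/-- The colour class of colour `c`: the set of all edges of colour `c`. -/
noncomputable def colourClass [Fintype E] (col : E → C) (c : C) : Finset E :=
  Finset.univ.filter fun e => col e = c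

/-- The set of vertices covered by a set of edges `M`. -/
def matchedVerts [DecidableEq V] (e₁ e₂ : E → V) (M : Finset E) : Finset V :=
  M.biUnion (edgeEnds e₁ e₂)

/-- The set of vertices spanned by the colour class of `c`
(i.e. incident to at least one edge of colour `c`). -/
noncomputable def spannedVerts [Fintype V] [DecidableEq V] [Fintype E]
    (e₁ e₂ : E → V) (col : E → C) (c : C) : Finset V :=
  Finset.univ.filter fun v => ∃ e, col e = c ∧ (e₁ e = v ∨ e₂ e = v)

/-- `u` and `v` are distinct vertices joined by an edge of colour `c`. -/
def adjOfColour (e₁ e₂ : E → V) (col : E → C) (c : C) (u v : V) : Prop :=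
  u ≠ v ∧ ∃ e, col e = c ∧ ((e₁ e = u ∧ e₂ e = v) ∨ (e₁ e = v ∧ e₂ e = u))

/-- The colour class of `c` is a vertex-disjoint union of (non-trivial) cliques:
whenever `uv` and `vw` are edges of colour `c` with `u ≠ w`, also `uw` is an
edge of colour `c`. -/
def IsCliqueUnion (e₁ e₂ : E → V) (col : E → C) (c : C) : Prop :=
  ∀ u v w, adjOfColour e₁ e₂ col c u v → adjOfColour e₁ e₂ col c v w → u ≠ w →
    adjOfColour e₁ e₂ col c u w

end Defs

/-!
Suppose there is no matching with `n` edges. The Tutte–Berge formula gives a set `S` whose removal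
leaves components `X` with `2 |S| + ∑ 2 ⌊|X| / 2⌋ ≤ 2n - 2`. A colour class spans at least
`2n + 2m` vertices, and a component contributes more than its even part only if it is odd and
fully spanned; among those, the components not covered from inside by the colour have a vertex
adjacent to `S`, and the clique structure sends them injectively into `S`. So every colour covers
at least `2m + 2` odd components from inside. Covering an odd component `X` takes at least
`|X| + 1` of the at most `m |X| (|X| - 1)` ordered coloured pairs in `X` (degree parity), so at
most `m (|X| - 1)` colours cover `X`. Double counting gives `n (2m + 2) ≤ m (2n - 2)`.
-/

theorem even_sum_card_filter_of_symm {α : Type*} {r : α → α → Prop} [DecidableRel r]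
    (hsymm : ∀ a b, r a b → r b a) (hirrefl : ∀ a, ¬ r a a) (s : Finset α) :
    Even (∑ a ∈ s, #{b ∈ s | r a b}) := by
  have hpairs : ∑ a ∈ s, #{b ∈ s | r a b} = #{p ∈ s ×ˢ s | r p.1 p.2} := by
    simp only [card_filter, sum_product]
  rw [hpairs, ← ZMod.natCast_eq_zero_iff_even, card_eq_sum_ones, Nat.cast_sum, Nat.cast_one]
  refine sum_involution (fun p _ => p.swap) (fun _ _ => by decide) (fun p hp _ => ?_)
    (fun p hp => ?_) (fun p _ => p.swap_swap)
  · obtain ⟨-, hp⟩ := mem_filter.1 hp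
    intro h
    exact hirrefl p.1 (by rwa [← Prod.fst_swap, h] at hp)
  · simp only [mem_filter, mem_product, Prod.fst_swap, Prod.snd_swap] at hp ⊢
    exact ⟨hp.1.symm, hsymm _ _ hp.2⟩

lemma sum_two_mul_div_two_add_card_odd {α : Type*} [DecidableEq α] {B : Finset α}
    (P : Finpartition B) : ∑ C ∈ P.parts, 2 * (#C / 2) + #{C ∈ P.parts | Odd #C} = #B := by
  rw [← P.sum_card_parts, card_filter, ← sum_add_distrib]
  refine sum_congr rfl fun C _ => ?_
  split_ifs with h <;> rw [Nat.odd_iff] at h <;> omega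

section ColourCover

variable {V C E : Type*} {e₁ e₂ : E → V} {col : E → C} {c : C}

lemma adjOfColour.symm {u v : V} (h : adjOfColour e₁ e₂ col c u v) :
    adjOfColour e₁ e₂ col c v u :=
  ⟨h.1.symm, h.2.imp fun _ he => ⟨he.1, he.2.symm⟩⟩

def ColourCoversOdd (e₁ e₂ : E → V) (col : E → C) (c : C) (X : Finset V) : Prop :=
  Odd #X ∧ ∀ v ∈ X, ∃ u ∈ X, adjOfColour e₁ e₂ col c v u

/-- The sum is at least `#X`, and it is even (it counts ordered pairs) while `#X` is odd. -/
lemma card_add_one_le_sum_card_adjOfColour {X : Finset V}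
    (hX : ColourCoversOdd e₁ e₂ col c X) :
    #X + 1 ≤ ∑ a ∈ X, #{u ∈ X | adjOfColour e₁ e₂ col c a u} := by
  have hle : #X ≤ ∑ a ∈ X, #{u ∈ X | adjOfColour e₁ e₂ col c a u} := by
    rw [card_eq_sum_ones]
    refine sum_le_sum fun a ha => card_pos.2 ?_
    obtain ⟨u, hu, hau⟩ := hX.2 a ha
    exact ⟨u, mem_filter.2 ⟨hu, hau⟩⟩
  have heven := even_sum_card_filter_of_symm (r := adjOfColour e₁ e₂ col c)
    (fun _ _ h => h.symm) (fun _ h => h.1 rfl) X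
  rcases hle.lt_or_eq with hlt | heq
  · exact hlt
  · exact absurd (heq ▸ heven) (Nat.not_even_iff_odd.2 hX.1)

end ColourCover

section Matching

variable {V E : Type*} [DecidableEq V] {e₁ e₂ : E → V}

lemma mem_matchedVerts {M : Finset E} {v : V} :
    v ∈ matchedVerts e₁ e₂ M ↔ ∃ e ∈ M, v ∈ edgeEnds e₁ e₂ e :=
  mem_biUnion

lemma matchedVerts_insert (M : Finset E) (e : E) :
    matchedVerts e₁ e₂ (insert e M) = edgeEnds e₁ e₂ e ∪ matchedVerts e₁ e₂ M :=
  biUnion_insert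

lemma edgeEnds_subset_matchedVerts {M : Finset E} {e : E} (he : e ∈ M) :
    edgeEnds e₁ e₂ e ⊆ matchedVerts e₁ e₂ M :=
  subset_biUnion_of_mem _ he

lemma exists_edgeEnds_eq_pair {e : E} {v : V} (h : v ∈ edgeEnds e₁ e₂ e) :
    ∃ w, edgeEnds e₁ e₂ e = {v, w} := by
  rcases mem_insert.1 h with rfl | h
  · exact ⟨e₂ e, rfl⟩
  · exact ⟨e₁ e, by rw [mem_singleton.1 h, edgeEnds, pair_comm]⟩

lemma edgeEnds_eq_pair_of_or {e : E} {u v : V}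
    (h : (e₁ e = u ∧ e₂ e = v) ∨ (e₁ e = v ∧ e₂ e = u)) : edgeEnds e₁ e₂ e = {u, v} := by
  rcases h with ⟨rfl, rfl⟩ | ⟨rfl, rfl⟩
  · rfl
  · exact pair_comm _ _

lemma edgeEnds_ne_of_eq_pair {e : E} {u v : V} (h : edgeEnds e₁ e₂ e = {u, v}) (huv : u ≠ v) :
    e₁ e ≠ e₂ e := by
  intro hloop
  rw [edgeEnds, hloop, pair_eq_singleton] at h
  have := congrArg card h
  rw [card_singleton, card_pair huv] at this
  omega

lemma ne_of_edgeEnds_eq_pair {e : E} {u v : V} (he : e₁ e ≠ e₂ e)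
    (h : edgeEnds e₁ e₂ e = {u, v}) : u ≠ v := by
  rintro rfl
  have := congrArg card h
  rw [edgeEnds, card_pair he, pair_eq_singleton, card_singleton] at this
  omega

lemma isMatchingE_empty : IsMatchingE e₁ e₂ (∅ : Finset E) := by
  simp [IsMatchingE]

namespace IsMatchingE

variable {M N : Finset E}

lemma subset (hM : IsMatchingE e₁ e₂ M) (h : N ⊆ M) : IsMatchingE e₁ e₂ N :=
  ⟨fun e he => hM.1 e (h he), fun a ha b hb hab => hM.2 a (h ha) b (h hb) hab⟩

lemma eq_of_mem_edgeEnds (hM : IsMatchingE e₁ e₂ M) {e f : E} (he : e ∈ M) (hf : f ∈ M)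
    {v : V} (hve : v ∈ edgeEnds e₁ e₂ e) (hvf : v ∈ edgeEnds e₁ e₂ f) : e = f := by
  by_contra hne
  exact disjoint_left.1 (hM.2 e he f hf hne) hve hvf

lemma matchedVerts_erase (hM : IsMatchingE e₁ e₂ M) {f : E} (hf : f ∈ M) :
    matchedVerts e₁ e₂ (M.erase f) = matchedVerts e₁ e₂ M \ edgeEnds e₁ e₂ f := by
  ext v
  simp only [mem_sdiff, mem_matchedVerts, mem_erase]
  constructor
  · rintro ⟨e, ⟨hef, heM⟩, hv⟩
    exact ⟨⟨e, heM, hv⟩, fun hvf => hef (hM.eq_of_mem_edgeEnds heM hf hv hvf)⟩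
  · rintro ⟨⟨e, heM, hv⟩, hvf⟩
    exact ⟨e, ⟨fun hef => hvf (hef ▸ hv), heM⟩, hv⟩

lemma insert_of_disjoint (hM : IsMatchingE e₁ e₂ M) {e : E} (he : e₁ e ≠ e₂ e)
    (hdisj : Disjoint (edgeEnds e₁ e₂ e) (matchedVerts e₁ e₂ M)) :
    IsMatchingE e₁ e₂ (insert e M) := by
  have key : ∀ f ∈ M, Disjoint (edgeEnds e₁ e₂ e) (edgeEnds e₁ e₂ f) := fun f hf =>
    hdisj.mono_right (edgeEnds_subset_matchedVerts hf)
  refine ⟨fun f hf => ?_, fun f hf g hg hfg => ?_⟩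
  · rcases mem_insert.1 hf with rfl | hf
    exacts [he, hM.1 f hf]
  · rcases mem_insert.1 hf with rfl | hfM <;> rcases mem_insert.1 hg with rfl | hgM
    exacts [absurd rfl hfg, key g hgM, (key f hfM).symm, hM.2 f hfM g hgM hfg]

lemma card_matchedVerts (hM : IsMatchingE e₁ e₂ M) :
    #(matchedVerts e₁ e₂ M) = 2 * #M := by
  rw [matchedVerts, card_biUnion fun a ha b hb hab => hM.2 a ha b hb hab, mul_comm,
    ← smul_eq_mul, ← sum_const]
  exact sum_congr rfl fun e he => card_pair (hM.1 e he)

end IsMatchingE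

end Matching

namespace Multigraph

variable {V E : Type*} [DecidableEq V] {e₁ e₂ : E → V}

def IsMatchingOn (e₁ e₂ : E → V) (A : Finset V) (M : Finset E) : Prop :=
  IsMatchingE e₁ e₂ M ∧ matchedVerts e₁ e₂ M ⊆ A

namespace IsMatchingOn

variable {A : Finset V} {M : Finset E}

lemma mono {A' : Finset V} (hM : IsMatchingOn e₁ e₂ A M) (h : A ⊆ A') :
    IsMatchingOn e₁ e₂ A' M :=
  ⟨hM.1, hM.2.trans h⟩

lemma insert_of_disjoint (hM : IsMatchingOn e₁ e₂ A M) {e : E} (he : e₁ e ≠ e₂ e)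
    (heA : edgeEnds e₁ e₂ e ⊆ A) (hdisj : Disjoint (edgeEnds e₁ e₂ e) (matchedVerts e₁ e₂ M)) :
    IsMatchingOn e₁ e₂ A (insert e M) :=
  ⟨hM.1.insert_of_disjoint he hdisj, by rw [matchedVerts_insert]; exact union_subset heA hM.2⟩

lemma insert_erase (hM : IsMatchingOn e₁ e₂ A M) {f g : E} (hf : f ∈ M) (hg : e₁ g ≠ e₂ g)
    (hgA : edgeEnds e₁ e₂ g ⊆ A)
    (hdisj : Disjoint (edgeEnds e₁ e₂ g) (matchedVerts e₁ e₂ M \ edgeEnds e₁ e₂ f)) :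
    IsMatchingOn e₁ e₂ A (insert g (M.erase f)) ∧ #(insert g (M.erase f)) = #M ∧
      matchedVerts e₁ e₂ (insert g (M.erase f)) =
        edgeEnds e₁ e₂ g ∪ (matchedVerts e₁ e₂ M \ edgeEnds e₁ e₂ f) := by
  have hmv := hM.1.matchedVerts_erase hf
  have hM' : IsMatchingOn e₁ e₂ A (M.erase f) :=
    ⟨hM.1.subset (erase_subset f M), hmv ▸ sdiff_subset.trans hM.2⟩
  have hgM : g ∉ M.erase f := fun h => by
    have := hdisj.mono_right (hmv ▸ edgeEnds_subset_matchedVerts h)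
    exact disjoint_left.1 this (mem_insert_self _ _) (mem_insert_self _ _)
  refine ⟨hM'.insert_of_disjoint hg hgA (hmv ▸ hdisj), ?_, by rw [matchedVerts_insert, hmv]⟩
  rw [card_insert_of_notMem hgM, card_erase_add_one hf]

end IsMatchingOn

def Adj (e₁ e₂ : E → V) (u v : V) : Prop := u ≠ v ∧ ∃ e, edgeEnds e₁ e₂ e = {u, v}

lemma Adj.symm {u v : V} (h : Adj e₁ e₂ u v) : Adj e₁ e₂ v u :=
  ⟨h.1.symm, h.2.imp fun _ he => he.trans (pair_comm u v)⟩

lemma adj_of_edgeEnds_eq_pair {e : E} (he : e₁ e ≠ e₂ e) {u v : V}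
    (h : edgeEnds e₁ e₂ e = {u, v}) : Adj e₁ e₂ u v :=
  ⟨ne_of_edgeEnds_eq_pair he h, e, h⟩

lemma _root_.adjOfColour.adj {C : Type*} {col : E → C} {c : C} {u v : V}
    (h : adjOfColour e₁ e₂ col c u v) : Adj e₁ e₂ u v :=
  ⟨h.1, h.2.imp fun _ he => edgeEnds_eq_pair_of_or he.2⟩

def reachSetoid (e₁ e₂ : E → V) (B : Finset V) : Setoid V where
  r := Relation.ReflTransGen fun x y => x ∈ B ∧ y ∈ B ∧ Adj e₁ e₂ x y
  iseqv := ⟨fun _ => .refl,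
    fun h => Relation.ReflTransGen.mono (fun _ _ h => ⟨h.2.1, h.1, h.2.2.symm⟩) _ _
      (Relation.ReflTransGen.swap _ _ h),
    .trans⟩

noncomputable def components (e₁ e₂ : E → V) (B : Finset V) : Finpartition B :=
  Finpartition.ofSetSetoid (reachSetoid e₁ e₂ B) B

lemma mem_components_part {B : Finset V} {u v : V} :
    v ∈ (components e₁ e₂ B).part u ↔ u ∈ B ∧ v ∈ B ∧ reachSetoid e₁ e₂ B u v :=
  Finpartition.mem_part_ofSetSetoid_iff_rel B

lemma mem_of_mem_components_of_adj {B C : Finset V} (hC : C ∈ (components e₁ e₂ B).parts)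
    {u v : V} (hu : u ∈ C) (hv : v ∈ B) (huv : Adj e₁ e₂ u v) : v ∈ C := by
  obtain rfl := (components e₁ e₂ B).part_eq_of_mem hC hu
  rw [mem_components_part] at hu ⊢
  exact ⟨hu.1, hv, hu.2.2.tail ⟨hu.1, hv, huv⟩⟩

lemma even_card_inter_matchedVerts {B C : Finset V} (hC : C ∈ (components e₁ e₂ B).parts)
    {M : Finset E} (hM : IsMatchingOn e₁ e₂ B M) : Even #(C ∩ matchedVerts e₁ e₂ M) := by
  have hsub := hM.1.subset (filter_subset (fun e => edgeEnds e₁ e₂ e ⊆ C) M)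
  suffices C ∩ matchedVerts e₁ e₂ M = matchedVerts e₁ e₂ {e ∈ M | edgeEnds e₁ e₂ e ⊆ C} by
    rw [this, hsub.card_matchedVerts]
    exact even_two_mul _
  ext v
  simp only [mem_inter, mem_matchedVerts, mem_filter]
  constructor
  · rintro ⟨hvC, e, heM, hve⟩
    obtain ⟨w, he⟩ := exists_edgeEnds_eq_pair hve
    have hwB : w ∈ B := hM.2 (edgeEnds_subset_matchedVerts heM (by simp [he]))
    have hwC := mem_of_mem_components_of_adj hC hvC hwB
      (adj_of_edgeEnds_eq_pair (hM.1.1 e heM) he)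
    exact ⟨e, ⟨heM, by simp [he, insert_subset_iff, hvC, hwC]⟩, hve⟩
  · rintro ⟨e, ⟨heM, heC⟩, hve⟩
    exact ⟨heC hve, e, heM, hve⟩

section MatchingNumber

variable [Fintype E]

noncomputable def matchingNumber (e₁ e₂ : E → V) (A : Finset V) : ℕ :=
  ({M | IsMatchingOn e₁ e₂ A M} : Finset (Finset E)).sup card

lemma IsMatchingOn.card_le_matchingNumber {A : Finset V} {M : Finset E}
    (hM : IsMatchingOn e₁ e₂ A M) : #M ≤ matchingNumber e₁ e₂ A :=
  le_sup (f := card) (mem_filter.2 ⟨mem_univ M, hM⟩)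

lemma exists_isMatchingOn_card_eq (e₁ e₂ : E → V) (A : Finset V) :
    ∃ M, IsMatchingOn e₁ e₂ A M ∧ #M = matchingNumber e₁ e₂ A := by
  obtain ⟨M, hM, hcard⟩ := exists_mem_eq_sup ({M | IsMatchingOn e₁ e₂ A M} : Finset (Finset E))
    ⟨∅, mem_filter.2 ⟨mem_univ _, isMatchingE_empty, by simp [matchedVerts]⟩⟩ card
  exact ⟨M, (mem_filter.1 hM).2, hcard.symm⟩

lemma matchingNumber_mono {A A' : Finset V} (h : A ⊆ A') :
    matchingNumber e₁ e₂ A ≤ matchingNumber e₁ e₂ A' :=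
  Finset.sup_le fun _ hM => ((mem_filter.1 hM).2.mono h).card_le_matchingNumber

lemma exists_isMatchingE_card_eq_of_le {A : Finset V} {n : ℕ}
    (h : n ≤ matchingNumber e₁ e₂ A) : ∃ M : Finset E, IsMatchingE e₁ e₂ M ∧ #M = n := by
  obtain ⟨M, hM, hMmax⟩ := exists_isMatchingOn_card_eq e₁ e₂ A
  obtain ⟨M', hM'M, hM'card⟩ := exists_subset_card_eq (hMmax ▸ h)
  exact ⟨M', hM.1.subset hM'M, hM'card⟩

lemma IsMatchingOn.mem_matchedVerts_of_adj {A : Finset V} {M : Finset E}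
    (hM : IsMatchingOn e₁ e₂ A M) (hMmax : #M = matchingNumber e₁ e₂ A) {u v : V}
    (hu : u ∈ A) (hv : v ∈ A) (huv : Adj e₁ e₂ u v) (huM : u ∉ matchedVerts e₁ e₂ M) :
    v ∈ matchedVerts e₁ e₂ M := by
  by_contra hvM
  obtain ⟨hne, e, he⟩ := huv
  have heM : e ∉ M := fun h => huM (edgeEnds_subset_matchedVerts h (by simp [he]))
  have hM' := hM.insert_of_disjoint (edgeEnds_ne_of_eq_pair he hne)
    (by simp [he, insert_subset_iff, hu, hv]) (by simp [he, huM, hvM])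
  have := hM'.card_le_matchingNumber
  rw [card_insert_of_notMem heM] at this
  omega

lemma exists_alternating_pair {A : Finset V} {M N : Finset E} (hM : IsMatchingOn e₁ e₂ A M)
    (hN : IsMatchingOn e₁ e₂ A N) (hNmax : #N = matchingNumber e₁ e₂ A) {z : V}
    (hzM : z ∈ matchedVerts e₁ e₂ M) (hzN : z ∉ matchedVerts e₁ e₂ N) :
    ∃ ez ∈ M, ∃ ea ∈ N, ea ∉ M ∧ ∃ a b, edgeEnds e₁ e₂ ez = {z, a} ∧
      edgeEnds e₁ e₂ ea = {a, b} ∧ z ≠ a ∧ a ≠ b ∧ b ≠ z := by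
  obtain ⟨ez, hezM, hzez⟩ := mem_matchedVerts.1 hzM
  obtain ⟨a, hez⟩ := exists_edgeEnds_eq_pair hzez
  have hezA : edgeEnds e₁ e₂ ez ⊆ A := (edgeEnds_subset_matchedVerts hezM).trans hM.2
  have haN : a ∈ matchedVerts e₁ e₂ N :=
    hN.mem_matchedVerts_of_adj hNmax (hezA (by simp [hez])) (hezA (by simp [hez]))
      (adj_of_edgeEnds_eq_pair (hM.1.1 ez hezM) hez) hzN
  obtain ⟨ea, heaN, haea⟩ := mem_matchedVerts.1 haN
  obtain ⟨b, hea⟩ := exists_edgeEnds_eq_pair haea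
  have hzeaN : z ∉ edgeEnds e₁ e₂ ea := fun h => hzN (edgeEnds_subset_matchedVerts heaN h)
  refine ⟨ez, hezM, ea, heaN, fun heaM => hzeaN ?_, a, b, hez, hea,
    ne_of_edgeEnds_eq_pair (hM.1.1 ez hezM) hez, ne_of_edgeEnds_eq_pair (hN.1.1 ea heaN) hea,
    by rintro rfl; simp [hea] at hzeaN⟩
  exact hM.1.eq_of_mem_edgeEnds heaM hezM haea (by simp [hez]) ▸ hzez

/-- `M'` is `M` switched along the alternating path of `M ∆ N` that starts at `z`; `y` is the other
end of that path. The path is followed one `M`-edge `za` and one `N`-edge `ab` at a time, by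
recursion on `#(N \ M)` after moving `za` into `N`. -/
theorem exists_swap_matchedVerts {A : Finset V} {M N : Finset E} (hM : IsMatchingOn e₁ e₂ A M)
    (hN : IsMatchingOn e₁ e₂ A N) (hNmax : #N = matchingNumber e₁ e₂ A) {z : V}
    (hzM : z ∈ matchedVerts e₁ e₂ M) (hzN : z ∉ matchedVerts e₁ e₂ N) :
    ∃ y, ∃ M' ⊆ M ∪ N, IsMatchingOn e₁ e₂ A M' ∧ #M' = #M ∧
      matchedVerts e₁ e₂ M' = (insert y (matchedVerts e₁ e₂ M)).erase z := by
  obtain ⟨ez, hezM, ea, heaN, heaM, a, b, hez, hea, hza, hab, hbz⟩ :=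
    exists_alternating_pair hM hN hNmax hzM hzN
  have hzez : z ∈ edgeEnds e₁ e₂ ez := by simp [hez]
  have haM : a ∈ matchedVerts e₁ e₂ M := edgeEnds_subset_matchedVerts hezM (by simp [hez])
  have hezA : edgeEnds e₁ e₂ ez ⊆ A := (edgeEnds_subset_matchedVerts hezM).trans hM.2
  have heaA : edgeEnds e₁ e₂ ea ⊆ A := (edgeEnds_subset_matchedVerts heaN).trans hN.2
  by_cases hbM : b ∈ matchedVerts e₁ e₂ M
  · obtain ⟨hN', hN'card, hN'mv⟩ :=
      hN.insert_erase heaN (hM.1.1 ez hezM) hezA (by simp [hez, hea, hzN, hza])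
    obtain ⟨y, M₁, hM₁sub, hM₁, hM₁card, hM₁mv⟩ := exists_swap_matchedVerts hM hN'
      (hN'card.trans hNmax) hbM (by simp [hN'mv, hez, hea, hbz, hab.symm])
    have hezM₁ : ez ∈ M₁ := by
      obtain ⟨f, hfM₁, hzf⟩ := mem_matchedVerts.1 (by simp [hM₁mv, hbz.symm, hzM] :
        z ∈ matchedVerts e₁ e₂ M₁)
      rcases mem_union.1 (hM₁sub hfM₁) with hfM | hfN'
      · exact hM.1.eq_of_mem_edgeEnds hfM hezM hzf hzez ▸ hfM₁
      · exact hN'.1.eq_of_mem_edgeEnds hfN' (mem_insert_self ez _) hzf hzez ▸ hfM₁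
    obtain ⟨hM₂, hM₂card, hM₂mv⟩ :=
      hM₁.insert_erase hezM₁ (hN.1.1 ea heaN) heaA (by simp [hez, hea, hM₁mv])
    refine ⟨y, _, fun f hf => ?_, hM₂, hM₂card.trans hM₁card, ?_⟩
    · have := @hM₁sub f
      simp only [mem_insert, mem_erase, mem_union] at hf this ⊢
      grind
    · ext x
      simp only [hM₂mv, hM₁mv, hez, hea, mem_union, mem_sdiff, mem_insert, mem_singleton,
        mem_erase]
      grind
  · obtain ⟨hM', hM'card, hM'mv⟩ :=
      hM.insert_erase hezM (hN.1.1 ea heaN) heaA (by simp [hez, hea, hbM])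
    refine ⟨b, _, fun f hf => ?_, hM', hM'card, ?_⟩
    · simp only [mem_insert, mem_erase, mem_union] at hf ⊢
      grind
    · ext x
      simp only [hM'mv, hez, hea, mem_union, mem_sdiff, mem_insert, mem_singleton, mem_erase]
      grind
termination_by #(N \ M)
decreasing_by
  refine (card_le_card fun f hf => ?_).trans_lt (card_erase_lt_of_mem (mem_sdiff.2 ⟨heaN, heaM⟩))
  simp only [mem_sdiff, mem_insert, mem_erase] at hf ⊢
  grind

/-- Gallai's lemma. Along a path from `u`, the next vertex `z` is covered by `M`; switching to a
maximum matching that misses `z` either shifts the missed vertex `u` to `z` or exposes an edge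
`uz` with both ends missed. -/
lemma eq_of_reach_of_notMem_matchedVerts {A : Finset V}
    (hA : ∀ v ∈ A, ∃ N, IsMatchingOn e₁ e₂ A N ∧ #N = matchingNumber e₁ e₂ A ∧
      v ∉ matchedVerts e₁ e₂ N)
    {u w : V} (huw : reachSetoid e₁ e₂ A u w) {M : Finset E} (hM : IsMatchingOn e₁ e₂ A M)
    (hMmax : #M = matchingNumber e₁ e₂ A) (huM : u ∉ matchedVerts e₁ e₂ M)
    (hwM : w ∉ matchedVerts e₁ e₂ M) : u = w := by
  change Relation.ReflTransGen _ u w at huw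
  induction huw using Relation.ReflTransGen.head_induction_on generalizing M with
  | refl => rfl
  | @head u z hstep _ ih =>
    obtain ⟨huA, hzA, huz⟩ := hstep
    have hzM := hM.mem_matchedVerts_of_adj hMmax huA hzA huz huM
    obtain ⟨N, hN, hNmax, hzN⟩ := hA z hzA
    obtain ⟨y, M', -, hM', hM'card, hM'mv⟩ := exists_swap_matchedVerts hM hN hNmax hzM hzN
    have hM'max := hM'card.trans hMmax
    have hzM' : z ∉ matchedVerts e₁ e₂ M' := by simp [hM'mv]
    by_contra huw
    by_cases hyu : y = u
    · subst hyu
      have hzw := ih hM' hM'max hzM' (by simp [hM'mv, hwM, Ne.symm huw])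
      exact hwM (hzw ▸ hzM)
    · exact hzM' (hM'.mem_matchedVerts_of_adj hM'max huA hzA huz
        (by simp [hM'mv, huM, Ne.symm hyu]))

lemma card_sdiff_matchedVerts_le_card_odd_components {A : Finset V}
    (hA : ∀ v ∈ A, ∃ N, IsMatchingOn e₁ e₂ A N ∧ #N = matchingNumber e₁ e₂ A ∧
      v ∉ matchedVerts e₁ e₂ N)
    {M : Finset E} (hM : IsMatchingOn e₁ e₂ A M) (hMmax : #M = matchingNumber e₁ e₂ A) :
    #(A \ matchedVerts e₁ e₂ M) ≤ #{C ∈ (components e₁ e₂ A).parts | Odd #C} := by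
  set P := components e₁ e₂ A
  refine card_le_card_of_injOn P.part (fun v hv => ?_) (fun u hu w hw huw => ?_)
  · obtain ⟨hvA, hvM⟩ := mem_sdiff.1 hv
    have hmissed : P.part v \ matchedVerts e₁ e₂ M = {v} := by
      ext x
      simp only [mem_sdiff, mem_singleton, P, mem_components_part]
      refine ⟨fun ⟨⟨_, _, hvx⟩, hxM⟩ => ?_, ?_⟩
      · exact (eq_of_reach_of_notMem_matchedVerts hA hvx hM hMmax hvM hxM).symm
      · rintro rfl
        exact ⟨⟨hvA, hvA, (reachSetoid e₁ e₂ A).refl x⟩, hvM⟩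
    have hodd := (even_card_inter_matchedVerts (P.part_mem.2 hvA) hM).add_one
    rw [← card_singleton v, ← hmissed, card_inter_add_card_sdiff] at hodd
    exact mem_filter.2 ⟨P.part_mem.2 hvA, hodd⟩
  · have hwu : u ∈ P.part w := huw ▸ P.mem_part_self.2 (mem_sdiff.1 hu).1
    exact (eq_of_reach_of_notMem_matchedVerts hA (mem_components_part.1 hwu).2.2 hM hMmax
      (mem_sdiff.1 hw).2 (mem_sdiff.1 hu).2).symm

/-- The Tutte–Berge bound. A vertex covered by every maximum matching is moved into `S`;
if there is none, Gallai's lemma applies to `A` itself with `S = ∅`. -/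
theorem exists_tutte_berge_set (e₁ e₂ : E → V) (A : Finset V) :
    ∃ S ⊆ A, #A + #S ≤
      2 * matchingNumber e₁ e₂ A + #{C ∈ (components e₁ e₂ (A \ S)).parts | Odd #C} := by
  induction A using Finset.strongInduction with
  | H A ih =>
  by_cases hess : ∃ v ∈ A, matchingNumber e₁ e₂ (A.erase v) < matchingNumber e₁ e₂ A
  · obtain ⟨v, hv, hlt⟩ := hess
    obtain ⟨S, hSA, hS⟩ := ih (A.erase v) (erase_ssubset hv)
    have hvS : v ∉ S := fun h => notMem_erase v A (hSA h)
    refine ⟨insert v S, insert_subset hv (hSA.trans (erase_subset v A)), ?_⟩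
    have hdiff : A \ insert v S = A.erase v \ S := by
      ext x
      simp only [mem_sdiff, mem_insert, mem_erase]
      tauto
    rw [hdiff, card_insert_of_notMem hvS]
    have := card_erase_add_one hv
    omega
  simp only [not_exists, not_and, not_lt] at hess
  have hA : ∀ v ∈ A, ∃ N, IsMatchingOn e₁ e₂ A N ∧ #N = matchingNumber e₁ e₂ A ∧
      v ∉ matchedVerts e₁ e₂ N := fun v hv => by
    obtain ⟨N, hN, hNmax⟩ := exists_isMatchingOn_card_eq e₁ e₂ (A.erase v)
    exact ⟨N, hN.mono (erase_subset v A),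
      hNmax.trans ((matchingNumber_mono (erase_subset v A)).antisymm (hess v hv)),
      fun h => notMem_erase v A (hN.2 h)⟩
  obtain ⟨M, hM, hMmax⟩ := exists_isMatchingOn_card_eq e₁ e₂ A
  refine ⟨∅, empty_subset A, ?_⟩
  rw [sdiff_empty, card_empty, add_zero, ← card_sdiff_add_card_eq_card hM.2,
    hM.1.card_matchedVerts, hMmax, add_comm]
  exact Nat.add_le_add_left (card_sdiff_matchedVerts_le_card_odd_components hA hM hMmax) _

lemma exists_two_mul_card_add_sum_le [Fintype V] (e₁ e₂ : E → V) :
    ∃ S : Finset V, 2 * #S + ∑ X ∈ (components e₁ e₂ (univ \ S)).parts, 2 * (#X / 2) ≤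
      2 * matchingNumber e₁ e₂ univ := by
  obtain ⟨S, -, hS⟩ := exists_tutte_berge_set e₁ e₂ univ
  have := sum_two_mul_div_two_add_card_odd (components e₁ e₂ (univ \ S))
  have := card_sdiff_add_card_eq_card (subset_univ S)
  exact ⟨S, by omega⟩

end MatchingNumber

section Colour

variable {C : Type*} {col : E → C} {c : C}

/-- Two components `c`-adjacent to the same `x ∈ S` would be joined through the `c`-clique
of `x`. -/
lemma card_components_adjOfColour_le (hclique : IsCliqueUnion e₁ e₂ col c) (B S : Finset V) :
    #{X ∈ (components e₁ e₂ B).parts | ∃ v ∈ X, ∃ x ∈ S, adjOfColour e₁ e₂ col c v x} ≤ #S := by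
  refine card_le_card_of_forall_subsingleton (fun X x => ∃ v ∈ X, adjOfColour e₁ e₂ col c v x)
    (fun X hX => ?_) (fun x _ X hX X' hX' => ?_)
  · obtain ⟨v, hv, x, hx, hvx⟩ := (mem_filter.1 hX).2
    exact ⟨x, hx, v, hv, hvx⟩
  obtain ⟨hX, v, hvX, hvx⟩ := hX
  obtain ⟨hX', v', hv'X', hv'x⟩ := hX'
  have hv'X : v' ∈ X := by
    obtain rfl | hne := eq_or_ne v v'
    · exact hvX
    refine mem_of_mem_components_of_adj (mem_filter.1 hX).1 hvX ?_
      (hclique v x v' hvx hv'x.symm hne).adj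
    exact (components e₁ e₂ B).le (mem_filter.1 hX').1 hv'X'
  exact (components e₁ e₂ B).eq_of_mem_parts (mem_filter.1 hX).1 (mem_filter.1 hX').1 hv'X hv'X'

variable [Fintype E] [Fintype C] {m : ℕ}

lemma card_filter_adjOfColour_le (u v : V) :
    #{c | adjOfColour e₁ e₂ col c u v} ≤
      #{e : E | (e₁ e = u ∧ e₂ e = v) ∨ (e₁ e = v ∧ e₂ e = u)} := by
  refine card_le_card_of_surjOn col fun c hc => ?_
  obtain ⟨-, e, hce, he⟩ := (mem_filter.1 hc).2
  exact ⟨e, mem_filter.2 ⟨mem_univ e, he⟩, hce⟩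

lemma sum_sum_card_adjOfColour_le
    (hmult : ∀ u v : V, #{e : E | (e₁ e = u ∧ e₂ e = v) ∨ (e₁ e = v ∧ e₂ e = u)} ≤ m)
    (X : Finset V) :
    ∑ c, ∑ a ∈ X, #{u ∈ X | adjOfColour e₁ e₂ col c a u} ≤ m * (#X * (#X - 1)) := by
  rw [sum_comm]
  calc ∑ a ∈ X, ∑ c, #{u ∈ X | adjOfColour e₁ e₂ col c a u}
      ≤ ∑ a ∈ X, (#X - 1) * m := sum_le_sum fun a ha => ?_
    _ = m * (#X * (#X - 1)) := by rw [sum_const, smul_eq_mul]; ring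
  calc ∑ c, #{u ∈ X | adjOfColour e₁ e₂ col c a u}
      = ∑ u ∈ X, #{c | adjOfColour e₁ e₂ col c a u} :=
        sum_card_bipartiteAbove_eq_sum_card_bipartiteBelow _
    _ = ∑ u ∈ X.erase a, #{c | adjOfColour e₁ e₂ col c a u} :=
        (sum_erase _ (by simp [adjOfColour])).symm
    _ ≤ (#X - 1) * m := by
        rw [← card_erase_of_mem ha, ← smul_eq_mul]
        exact sum_le_card_nsmul _ _ _ fun u _ => (card_filter_adjOfColour_le a u).trans (hmult a u)

lemma card_filter_colourCoversOdd_le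
    (hmult : ∀ u v : V, #{e : E | (e₁ e = u ∧ e₂ e = v) ∨ (e₁ e = v ∧ e₂ e = u)} ≤ m)
    (X : Finset V) : #{c | ColourCoversOdd e₁ e₂ col c X} ≤ m * (2 * (#X / 2)) := by
  by_cases hodd : Odd #X
  · have hX : 2 * (#X / 2) = #X - 1 := by rw [Nat.odd_iff] at hodd; omega
    rw [hX]
    refine Nat.le_of_mul_le_mul_right ?_ (Nat.succ_pos #X)
    calc #{c | ColourCoversOdd e₁ e₂ col c X} * (#X + 1)
        ≤ ∑ c ∈ {c | ColourCoversOdd e₁ e₂ col c X},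
            ∑ a ∈ X, #{u ∈ X | adjOfColour e₁ e₂ col c a u} := by
          rw [← smul_eq_mul]
          exact card_nsmul_le_sum _ _ _ fun c hc =>
            card_add_one_le_sum_card_adjOfColour (mem_filter.1 hc).2
      _ ≤ ∑ c, ∑ a ∈ X, #{u ∈ X | adjOfColour e₁ e₂ col c a u} :=
          sum_le_sum_of_subset (filter_subset _ _)
      _ ≤ m * (#X * (#X - 1)) := sum_sum_card_adjOfColour_le hmult X
      _ ≤ m * (#X - 1) * (#X + 1) := by
          rw [mul_assoc, mul_comm (#X - 1)]
          gcongr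
          omega
  · simp [ColourCoversOdd, hodd]

end Colour

section Spanned

variable [Fintype V] [Fintype E] {C : Type*} {col : E → C} {c : C}

lemma exists_adjOfColour_of_mem_spannedVerts (hloop : ∀ e : E, e₁ e ≠ e₂ e) {v : V}
    (hv : v ∈ spannedVerts e₁ e₂ col c) : ∃ u, adjOfColour e₁ e₂ col c v u := by
  obtain ⟨e, hce, rfl | rfl⟩ := (mem_filter.1 hv).2
  · exact ⟨e₂ e, hloop e, e, hce, Or.inl ⟨rfl, rfl⟩⟩
  · exact ⟨e₁ e, (hloop e).symm, e, hce, Or.inr ⟨rfl, rfl⟩⟩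

/-- If `X` is odd, spanned by `c` and not covered by `c`, a vertex of `X` has a `c`-neighbour only
outside `X`, hence in `S`. -/
lemma card_inter_spannedVerts_le (hloop : ∀ e : E, e₁ e ≠ e₂ e) {S X : Finset V}
    (hX : X ∈ (components e₁ e₂ (univ \ S)).parts) :
    #(X ∩ spannedVerts e₁ e₂ col c) ≤ 2 * (#X / 2) +
      (if ColourCoversOdd e₁ e₂ col c X then 1 else 0) +
      (if ∃ v ∈ X, ∃ x ∈ S, adjOfColour e₁ e₂ col c v x then 1 else 0) := by
  have hdiv := Nat.div_add_mod #X 2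
  have hmod := Nat.mod_lt #X two_pos
  by_cases hXsp : X ⊆ spannedVerts e₁ e₂ col c
  swap
  · have := card_lt_card
      ⟨inter_subset_left (s₂ := spannedVerts e₁ e₂ col c), fun h => hXsp (h.trans inter_subset_right)⟩
    omega
  rw [inter_eq_left.2 hXsp]
  by_cases hodd : Odd #X
  swap
  · rw [Nat.odd_iff] at hodd
    omega
  by_cases hcov : ∀ v ∈ X, ∃ u ∈ X, adjOfColour e₁ e₂ col c v u
  · rw [if_pos ⟨hodd, hcov⟩]
    omega
  have hadjS : ∃ v ∈ X, ∃ x ∈ S, adjOfColour e₁ e₂ col c v x := by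
    simp only [not_forall, not_exists, not_and] at hcov
    obtain ⟨v, hvX, hv⟩ := hcov
    obtain ⟨x, hvx⟩ := exists_adjOfColour_of_mem_spannedVerts hloop (hXsp hvX)
    refine ⟨v, hvX, x, ?_, hvx⟩
    by_contra hxS
    exact hv x (mem_of_mem_components_of_adj hX hvX (by simp [hxS]) hvx.adj) hvx
  rw [if_pos hadjS]
  omega

lemma card_spannedVerts_le (hloop : ∀ e : E, e₁ e ≠ e₂ e) (hclique : IsCliqueUnion e₁ e₂ col c)
    (S : Finset V) :
    #(spannedVerts e₁ e₂ col c) ≤ 2 * #S +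
      ∑ X ∈ (components e₁ e₂ (univ \ S)).parts, 2 * (#X / 2) +
      #{X ∈ (components e₁ e₂ (univ \ S)).parts | ColourCoversOdd e₁ e₂ col c X} := by
  have hS := card_components_adjOfColour_le hclique (univ \ S) S
  have hsum := sum_le_sum fun X (hX : X ∈ (components e₁ e₂ (univ \ S)).parts) =>
    card_inter_spannedVerts_le (col := col) (c := c) hloop hX
  rw [sum_add_distrib, sum_add_distrib, sum_boole, sum_boole, Nat.cast_id, Nat.cast_id] at hsum
  set P := components e₁ e₂ (univ \ S)
  set sp := spannedVerts e₁ e₂ col c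
  have hsplit : #sp ≤ ∑ X ∈ P.parts, #(X ∩ sp) + #S := by
    refine (card_le_card_sdiff_add_card (t := S)).trans ?_
    gcongr
    refine (card_le_card fun v hv => mem_biUnion.2 ?_).trans card_biUnion_le
    have hvB : v ∈ univ \ S := mem_sdiff.2 ⟨mem_univ v, (mem_sdiff.1 hv).2⟩
    exact ⟨P.part v, P.part_mem.2 hvB, mem_inter.2 ⟨P.mem_part_self.2 hvB, (mem_sdiff.1 hv).1⟩⟩
  omega

end Spanned

end Multigraph

open Multigraph in
/-- every `(n, 2n + 2m, m)`-multigraph (each colour class a disjoint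
union of non-trivial cliques spanning at least `2n + 2m` vertices, edge
multiplicity at most `m`) contains a matching of size `n`. -/
theorem stmt_4 {V E : Type*} [Fintype V] [DecidableEq V] [Fintype E]
    (n m : ℕ) (e₁ e₂ : E → V) (col : E → Fin n)
    (hloop : ∀ e : E, e₁ e ≠ e₂ e)
    (hclique : ∀ c : Fin n, IsCliqueUnion e₁ e₂ col c)
    (hspan : ∀ c : Fin n, 2 * n + 2 * m ≤ (spannedVerts e₁ e₂ col c).card)
    (hmult : ∀ u v : V,
      (Finset.univ.filter fun e : E =>
        (e₁ e = u ∧ e₂ e = v) ∨ (e₁ e = v ∧ e₂ e = u)).card ≤ m) :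
    ∃ M : Finset E, IsMatchingE e₁ e₂ M ∧ M.card = n := by
  obtain rfl | hn := n.eq_zero_or_pos
  · exact ⟨∅, isMatchingE_empty, rfl⟩
  by_contra hno
  have hν : matchingNumber e₁ e₂ univ < n :=
    lt_of_not_ge fun h => hno (exists_isMatchingE_card_eq_of_le h)
  obtain ⟨S, hS⟩ := exists_two_mul_card_add_sum_le e₁ e₂
  have hsp c := card_spannedVerts_le hloop (hclique c) S
  set P := components e₁ e₂ (univ \ S)
  set W := ∑ X ∈ P.parts, 2 * (#X / 2)
  have hcount : n * (2 * m + 2) ≤ m * W := calc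
    n * (2 * m + 2) = ∑ _c : Fin n, (2 * m + 2) := by simp
    _ ≤ ∑ c, #{X ∈ P.parts | ColourCoversOdd e₁ e₂ col c X} := sum_le_sum fun c _ => by
      have := hsp c
      have := hspan c
      omega
    _ = ∑ X ∈ P.parts, #{c | ColourCoversOdd e₁ e₂ col c X} :=
      sum_card_bipartiteAbove_eq_sum_card_bipartiteBelow _
    _ ≤ ∑ X ∈ P.parts, m * (2 * (#X / 2)) :=
      sum_le_sum fun X _ => card_filter_colourCoversOdd_le hmult X
    _ = m * W := (mul_sum _ _ _).symm
  nlinarith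
end

section
/- For all sufficiently large n, every n-edge-coloured bipartite multigraph in which each colour class is a matching of size at least n contains a rainbow matching of size at least n - \sqrt{n}. -/
open Finset
open scoped Classical

/-! Let `M` be a maximum rainbow matching, of size `s`, so that `t = n - s` colours are missing
from `M`. Call an alternating path *good* if it starts at a vertex of the first side not covered
by `M` and its non-`M` edges have pairwise distinct colours, all missing from `M`. A good path
never ends at a vertex not covered by `M`, since switching along it would enlarge `M`. Adding
the missing colours one by one, the set of `M`-edges reached by good paths using only the colours
added so far grows by at least `n - s` at every step: of the `n` edges of the new colour, at most
`s - |reached|` start at an `M`-edge that is not yet reached, and each of the others extends a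
good path (or ends on it). Hence `t (n - s) ≤ s`, i.e. `t² ≤ s ≤ n`.

Only the injectivity, on a rainbow matching, of the endpoint maps `a`, `b` to the two sides and
of the colour map `col` matters, so these are taken to be arbitrary maps on the edges. -/

theorem List.injOn_toFinset_of_nodup_map {α β : Type*} [DecidableEq α] {f : α → β} {L : List α}
    (hL : (L.map f).Nodup) : Set.InjOn f ↑L.toFinset := fun _ hx _ hy =>
  List.inj_on_of_nodup_map hL (List.mem_toFinset.1 hx) (List.mem_toFinset.1 hy)

section RainbowPaths

variable {E A B C : Type*} (a : E → A) (b : E → B) (col : E → C)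

def IsRainbowMatching (N : Finset E) : Prop :=
  Set.InjOn a N ∧ Set.InjOn b N ∧ Set.InjOn col N

def IsMaximumRainbowMatching (M : Finset E) : Prop :=
  IsRainbowMatching a b col M ∧ ∀ N, IsRainbowMatching a b col N → N.card ≤ M.card

theorem exists_isMaximumRainbowMatching [Fintype E] :
    ∃ M, IsMaximumRainbowMatching a b col M := by
  obtain ⟨M, hM, hmax⟩ := exists_max_image (univ.filter (IsRainbowMatching a b col)) card
    ⟨∅, mem_filter.2 ⟨mem_univ _, by simp [IsRainbowMatching]⟩⟩
  exact ⟨M, (mem_filter.1 hM).2, fun N hN => hmax N (mem_filter.2 ⟨mem_univ _, hN⟩)⟩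

variable (M : Finset E)

/-- `IsGoodPath e P`: the non-`M` edges of a good path, listed backwards from its last edge `e`.
Consecutive edges `e` (later) and `y` (earlier) are joined by the edge `m ∈ M` with
`b m = b y` and `a m = a e`; the earliest edge `x` starts at a vertex `a x` not covered by `M`. -/
def IsGoodPath : E → List E → Prop
  | e, [] => col e ∉ M.image col ∧ a e ∉ M.image a
  | e, y :: P => IsGoodPath y P ∧ col e ∉ M.image col ∧ col e ∉ (y :: P).map col ∧
      b e ∉ (y :: P).map b ∧ ∃ m ∈ M, b m = b y ∧ a e = a m

/-- `M` switched along the path `e :: P`, whose `M`-edges are those with `b`-end on `P`. -/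
noncomputable def augment (e : E) (P : List E) : Finset E :=
  M.filter (fun m => b m ∉ P.map b) ∪ (e :: P).toFinset

variable {a b col M}

namespace IsGoodPath

variable {e : E} {P : List E}

theorem col_notMem (h : IsGoodPath a b col M e P) :
    ∀ g ∈ e :: P, col g ∉ M.image col := by
  induction P generalizing e with
  | nil => simpa using h.1
  | cons y P ih => exact List.forall_mem_cons.2 ⟨h.2.1, ih h.1⟩

theorem nodup_map_col (h : IsGoodPath a b col M e P) :
    ((e :: P).map col).Nodup := by
  induction P generalizing e with
  | nil => simp
  | cons y P ih => exact List.nodup_cons.2 ⟨h.2.2.1, ih h.1⟩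

theorem nodup_map_b (h : IsGoodPath a b col M e P) :
    ((e :: P).map b).Nodup := by
  induction P generalizing e with
  | nil => simp
  | cons y P ih => exact List.nodup_cons.2 ⟨h.2.2.2.1, ih h.1⟩

theorem exists_b_eq (h : IsGoodPath a b col M e P) :
    ∀ g ∈ P, ∃ m ∈ M, b m = b g := by
  induction P generalizing e with
  | nil => simp
  | cons y P ih =>
    obtain ⟨hy, -, -, -, m, hm, hmb, -⟩ := h
    exact List.forall_mem_cons.2 ⟨⟨m, hm, hmb⟩, ih hy⟩

theorem a_notMem_image_or (h : IsGoodPath a b col M e P) :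
    ∀ g ∈ e :: P, a g ∉ M.image a ∨ ∃ m ∈ M, a g = a m ∧ b m ∈ P.map b := by
  induction P generalizing e with
  | nil => exact List.forall_mem_singleton.2 (Or.inl h.2)
  | cons y P ih =>
    obtain ⟨hy, -, -, -, m, hm, hmb, hma⟩ := h
    refine List.forall_mem_cons.2 ⟨Or.inr ⟨m, hm, hma, by simp [hmb]⟩, fun g hg => ?_⟩
    rcases ih hy g hg with hfree | ⟨m', hm', hgm', hm'P⟩
    · exact Or.inl hfree
    · exact Or.inr ⟨m', hm', hgm', List.mem_cons_of_mem _ hm'P⟩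

theorem nodup_map_a (hM : Set.InjOn a M) (h : IsGoodPath a b col M e P) :
    ((e :: P).map a).Nodup := by
  induction P generalizing e with
  | nil => simp
  | cons y P ih =>
    refine List.nodup_cons.2 ⟨?_, ih h.1⟩
    obtain ⟨hy, -, -, -, m, hm, hmb, hma⟩ := h
    rw [List.mem_map]
    rintro ⟨g, hg, hge⟩
    rcases hy.a_notMem_image_or g hg with hfree | ⟨m', hm', hgm', hm'P⟩
    · exact hfree (mem_image.2 ⟨m, hm, by rw [hge, hma]⟩)
    · -- `m` is the `M`-edge entered from `y`, so its `b`-end cannot occur again before `y`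
      have : m' = m := hM hm' hm (by rw [← hgm', hge, hma])
      rw [this, hmb] at hm'P
      exact List.nodup_cons.1 hy.nodup_map_b |>.1 hm'P

theorem exists_suffix (h : IsGoodPath a b col M e P) :
    ∀ g ∈ e :: P, ∃ Q, IsGoodPath a b col M g Q ∧ g :: Q <:+ e :: P := by
  induction P generalizing e with
  | nil => simpa using ⟨[], h, List.suffix_refl _⟩
  | cons y P ih =>
    refine List.forall_mem_cons.2 ⟨⟨y :: P, h, List.suffix_refl _⟩, fun g hg => ?_⟩
    obtain ⟨Q, hQ, hsuf⟩ := ih h.1 g hg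
    exact ⟨Q, hQ, hsuf.trans (List.suffix_cons _ _)⟩

theorem disjoint_toFinset (h : IsGoodPath a b col M e P) :
    Disjoint M (e :: P).toFinset :=
  disjoint_right.2 fun g hg hgM =>
    h.col_notMem g (List.mem_toFinset.1 hg) (mem_image_of_mem col hgM)

theorem isRainbowMatching_augment (hM : IsRainbowMatching a b col M)
    (h : IsGoodPath a b col M e P) (he : b e ∉ M.image b) :
    IsRainbowMatching a b col (augment b M e P) := by
  have hdisj := disjoint_coe.2
    (h.disjoint_toFinset.mono_left (filter_subset (fun m => b m ∉ P.map b) M))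
  have hsub : (↑(M.filter fun m => b m ∉ P.map b) : Set E) ⊆ ↑M :=
    coe_subset.2 (filter_subset _ _)
  simp only [augment, IsRainbowMatching, coe_union, Set.injOn_union hdisj, mem_coe, mem_filter,
    List.mem_toFinset]
  refine ⟨⟨hM.1.mono hsub, List.injOn_toFinset_of_nodup_map (h.nodup_map_a hM.1), ?_⟩,
    ⟨hM.2.1.mono hsub, List.injOn_toFinset_of_nodup_map h.nodup_map_b, ?_⟩,
    ⟨hM.2.2.mono hsub, List.injOn_toFinset_of_nodup_map h.nodup_map_col, ?_⟩⟩
  · rintro m ⟨hm, hmP⟩ g hg hmg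
    rcases h.a_notMem_image_or g hg with hfree | ⟨m', hm', hgm', hm'P⟩
    · exact hfree (mem_image.2 ⟨m, hm, hmg⟩)
    · exact hmP (hM.1 hm' hm (hgm'.symm.trans hmg.symm) ▸ hm'P)
  · rintro m ⟨hm, hmP⟩ g hg hmg
    rcases List.mem_cons.1 hg with rfl | hgP
    · exact he (mem_image.2 ⟨m, hm, hmg⟩)
    · exact hmP (hmg ▸ List.mem_map_of_mem hgP)
  · rintro m ⟨hm, -⟩ g hg hmg
    exact h.col_notMem g hg (mem_image.2 ⟨m, hm, hmg⟩)

theorem card_lt_card_augment (hM : Set.InjOn b M) (h : IsGoodPath a b col M e P) :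
    M.card < (augment b M e P).card := by
  have hleft : (M.filter fun m => b m ∈ P.map b).card ≤ P.length :=
    calc (M.filter fun m => b m ∈ P.map b).card
        ≤ (P.map b).toFinset.card :=
          card_le_card_of_injOn b (fun m hm => List.mem_toFinset.2 (mem_filter.1 hm).2)
            (hM.mono (coe_subset.2 (filter_subset _ _)))
      _ ≤ P.length := (List.toFinset_card_le _).trans_eq (List.length_map _)
  have hpath : (e :: P).toFinset.card = P.length + 1 :=
    List.toFinset_card_of_nodup (h.nodup_map_col.of_map col)
  have hsplit := card_filter_add_card_filter_not (s := M) (fun m => b m ∈ P.map b)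
  rw [augment, card_union_of_disjoint (h.disjoint_toFinset.mono_left (filter_subset _ _)), hpath]
  omega

theorem b_mem_image (hM : IsMaximumRainbowMatching a b col M) (h : IsGoodPath a b col M e P) :
    b e ∈ M.image b := by
  by_contra he
  exact (h.card_lt_card_augment hM.1.2.1).not_ge (hM.2 _ (h.isRainbowMatching_augment hM.1 he))

end IsGoodPath

variable (a b col M) in
/-- The edges of `M` entered by a good path whose colours all lie in `S`. -/
noncomputable def reached (S : Finset C) : Finset E :=
  M.filter fun m => ∃ e P, IsGoodPath a b col M e P ∧ (∀ g ∈ e :: P, col g ∈ S) ∧ b m = b e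

variable (a b col M) in
theorem reached_subset (S : Finset C) : reached a b col M S ⊆ M := filter_subset _ _

theorem exists_mem_reached_insert (hM : IsMaximumRainbowMatching a b col M) {c : C}
    {S : Finset C} (hc : c ∉ M.image col) (hcS : c ∉ S) {x : E} (hx : col x = c)
    (hax : a x ∉ M.image a ∨ ∃ m ∈ reached a b col M S, a x = a m) :
    ∃ m ∈ reached a b col M (insert c S), b m = b x := by
  have of_path (P : List E) (hP : IsGoodPath a b col M x P) (hPS : ∀ g ∈ P, col g ∈ S) :
      ∃ m ∈ reached a b col M (insert c S), b m = b x := by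
    obtain ⟨m, hm, hmx⟩ := mem_image.1 (hP.b_mem_image hM)
    refine ⟨m, mem_filter.2 ⟨hm, x, P, hP, ?_, hmx⟩, hmx⟩
    exact List.forall_mem_cons.2
      ⟨hx ▸ mem_insert_self _ _, fun g hg => mem_insert_of_mem (hPS g hg)⟩
  have hxM : col x ∉ M.image col := hx ▸ hc
  rcases hax with hfree | ⟨m₀, hm₀, hxm₀⟩
  · exact of_path [] ⟨hxM, hfree⟩ (by simp)
  obtain ⟨hm₀M, y, P, hP, hPS, hm₀y⟩ := mem_filter.1 hm₀
  by_cases hxP : b x ∈ (y :: P).map b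
  · -- `x` ends at a vertex `b g` of the path: cut the path at `g` instead of extending it
    obtain ⟨g, hg, hgx⟩ := List.mem_map.1 hxP
    obtain ⟨Q, hQ, hsuf⟩ := hP.exists_suffix g hg
    obtain ⟨m, hm, hmg⟩ : ∃ m ∈ M, b m = b g := by
      rcases List.mem_cons.1 hg with rfl | hgP
      · exact ⟨m₀, hm₀M, hm₀y⟩
      · exact hP.exists_b_eq g hgP
    refine ⟨m, mem_filter.2 ⟨hm, g, Q, hQ, fun g' hg' => ?_, hmg⟩, hmg.trans hgx⟩
    exact mem_insert_of_mem (hPS g' (hsuf.subset hg'))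
  · refine of_path (y :: P) ⟨hP, hxM, ?_, hxP, m₀, hm₀M, hm₀y, hxm₀⟩ hPS
    rw [hx, List.mem_map]
    rintro ⟨g, hg, rfl⟩
    exact hcS (hPS g hg)

theorem card_add_card_reached_le (hM : IsMaximumRainbowMatching a b col M) {c : C}
    {S : Finset C} (hc : c ∉ M.image col) (hcS : c ∉ S) {K : Finset E}
    (hKc : ∀ x ∈ K, col x = c) (hKa : Set.InjOn a K) (hKb : Set.InjOn b K) :
    K.card + (reached a b col M S).card ≤ (reached a b col M (insert c S)).card + M.card := by
  set p : E → Prop := fun x => a x ∉ M.image a ∨ ∃ m ∈ reached a b col M S, a x = a m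
  have hstart : (K.filter fun x => ¬ p x).card ≤ (M \ reached a b col M S).card :=
    calc (K.filter fun x => ¬ p x).card
        ≤ ((M \ reached a b col M S).image a).card := by
          refine card_le_card_of_injOn a (fun x hx => ?_)
            (hKa.mono (coe_subset.2 (filter_subset _ _)))
          simp only [p, mem_coe, mem_filter, not_or, not_not, not_exists, not_and] at hx
          obtain ⟨m, hm, hmx⟩ := mem_image.1 hx.2.1
          exact mem_image.2 ⟨m, mem_sdiff.2 ⟨hm, fun hmS => hx.2.2 m hmS hmx.symm⟩, hmx⟩
      _ ≤ (M \ reached a b col M S).card := card_image_le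
  have hend : (K.filter p).card ≤ (reached a b col M (insert c S)).card :=
    calc (K.filter p).card
        ≤ ((reached a b col M (insert c S)).image b).card := by
          refine card_le_card_of_injOn b (fun x hx => ?_)
            (hKb.mono (coe_subset.2 (filter_subset _ _)))
          obtain ⟨hxK, hpx⟩ := mem_filter.1 hx
          obtain ⟨m, hm, hmx⟩ := exists_mem_reached_insert hM hc hcS (hKc x hxK) hpx
          exact mem_image.2 ⟨m, hm, hmx⟩
      _ ≤ (reached a b col M (insert c S)).card := card_image_le
  have hsplit := card_filter_add_card_filter_not (s := K) p
  have hsdiff := card_sdiff_of_subset (reached_subset a b col M S)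
  have hle := card_le_card (reached_subset a b col M S)
  omega

theorem card_mul_le_card_reached [Fintype E] (hM : IsMaximumRainbowMatching a b col M)
    {k : ℕ} (T : Finset C) (hT : ∀ c ∈ T, c ∉ M.image col)
    (hK : ∀ c ∈ T, Set.InjOn a (colourClass col c) ∧ Set.InjOn b (colourClass col c) ∧
      k ≤ (colourClass col c).card) :
    T.card * k ≤ (reached a b col M T).card + T.card * M.card := by
  induction T using Finset.induction_on with
  | empty => simp
  | insert c T hcT ih =>
    rw [forall_mem_insert] at hT hK
    have hgrow := card_add_card_reached_le hM hT.1 hcT (K := colourClass col c)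
      (fun x hx => (mem_filter.1 hx).2) hK.1.1 hK.1.2.1
    have := ih hT.2 hK.2
    rw [card_insert_of_notMem hcT, add_mul, add_mul, one_mul]
    linarith [hK.1.2.2]

theorem IsMaximumRainbowMatching.card_sub_mul_le [Fintype E] [Fintype C]
    (hM : IsMaximumRainbowMatching a b col M) {k : ℕ}
    (hK : ∀ c, Set.InjOn a (colourClass col c) ∧ Set.InjOn b (colourClass col c) ∧
      k ≤ (colourClass col c).card) :
    (Fintype.card C - M.card) * k ≤ M.card * (Fintype.card C - M.card + 1) := by
  have hmissing : (univ \ M.image col).card = Fintype.card C - M.card := by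
    rw [card_sdiff_of_subset (subset_univ _), card_univ, card_image_of_injOn hM.1.2.2]
  have hcount := card_mul_le_card_reached hM (univ \ M.image col)
    (fun c hc => (mem_sdiff.1 hc).2) (fun c _ => hK c)
  have hle := card_le_card (reached_subset a b col M (univ \ M.image col))
  rw [hmissing] at hcount
  linarith

end RainbowPaths

theorem sub_sqrt_le_of_sub_mul_le {s n : ℕ} (hsn : s ≤ n) (h : (n - s) * n ≤ s * (n - s + 1)) :
    (n : ℝ) - √n ≤ s := by
  have hR : ((n - s : ℕ) : ℝ) * n ≤ s * ((n - s : ℕ) + 1) := by exact_mod_cast h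
  rw [Nat.cast_sub hsn] at hR
  have hsq : ((n : ℝ) - s) ^ 2 ≤ n := by nlinarith [(Nat.cast_le.2 hsn : (s : ℝ) ≤ n)]
  linarith [le_abs_self ((n : ℝ) - s), Real.abs_le_sqrt hsq]

section BipartiteEnds

variable {V E C : Type*} [DecidableEq V] (e₁ e₂ : E → V) (part : V → Bool)

def endOnSide (s : Bool) (e : E) : V := if part (e₁ e) = s then e₁ e else e₂ e

variable {e₁ e₂ part}

theorem endOnSide_mem_edgeEnds (s : Bool) (e : E) :
    endOnSide e₁ e₂ part s e ∈ edgeEnds e₁ e₂ e := by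
  unfold endOnSide edgeEnds
  split_ifs <;> simp

theorem endOnSide_part_eq_of_mem_edgeEnds (hbip : ∀ e, part (e₁ e) ≠ part (e₂ e)) {e : E}
    {v : V} (hv : v ∈ edgeEnds e₁ e₂ e) : endOnSide e₁ e₂ part (part v) e = v := by
  simp only [edgeEnds, mem_insert, mem_singleton] at hv
  rcases hv with rfl | rfl
  · exact if_pos rfl
  · exact if_neg (hbip e)

theorem isMatchingE_iff_injOn_endOnSide (hbip : ∀ e, part (e₁ e) ≠ part (e₂ e))
    {N : Finset E} : IsMatchingE e₁ e₂ N ↔ ∀ s, Set.InjOn (endOnSide e₁ e₂ part s) N := by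
  constructor
  · rintro ⟨-, hdisj⟩ s x hx y hy hxy
    by_contra hne
    exact disjoint_left.1 (hdisj x hx y hy hne) (endOnSide_mem_edgeEnds s x)
      (hxy ▸ endOnSide_mem_edgeEnds s y)
  · refine fun hinj => ⟨fun e _ he => hbip e (congrArg part he), fun x hx y hy hne => ?_⟩
    refine disjoint_left.2 fun v hvx hvy => hne (hinj (part v) hx hy ?_)
    rw [endOnSide_part_eq_of_mem_edgeEnds hbip hvx, endOnSide_part_eq_of_mem_edgeEnds hbip hvy]

theorem isRainbowMatching_endOnSide_iff (hbip : ∀ e, part (e₁ e) ≠ part (e₂ e)) {col : E → C}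
    {N : Finset E} :
    IsRainbowMatching (endOnSide e₁ e₂ part false) (endOnSide e₁ e₂ part true) col N ↔
      IsMatchingE e₁ e₂ N ∧ IsRainbow col N := by
  rw [isMatchingE_iff_injOn_endOnSide hbip, Bool.forall_bool, IsRainbowMatching, IsRainbow,
    and_assoc]

end BipartiteEnds

/-- Barát–Gyárfás–Sárközy: for all sufficiently large `n`, every
`n`-edge-coloured bipartite multigraph whose colour classes are matchings of size
at least `n` contains a rainbow matching of size at least `n - √n`. -/
theorem stmt_8 :
    ∃ n₀ : ℕ, ∀ n : ℕ, n₀ ≤ n →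
      ∀ (V E : Type) [Fintype V] [DecidableEq V] [Fintype E],
        ∀ (e₁ e₂ : E → V) (col : E → Fin n) (part : V → Bool),
          (∀ e : E, part (e₁ e) ≠ part (e₂ e)) →
          (∀ c : Fin n, IsMatchingE e₁ e₂ (colourClass col c) ∧
            n ≤ (colourClass col c).card) →
          ∃ M : Finset E, IsMatchingE e₁ e₂ M ∧ IsRainbow col M ∧
            (n : ℝ) - Real.sqrt n ≤ M.card := by
  refine ⟨0, fun n _ V E _ _ _ e₁ e₂ col part hbip hcol => ?_⟩
  obtain ⟨M, hM⟩ := exists_isMaximumRainbowMatching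
    (endOnSide e₁ e₂ part false) (endOnSide e₁ e₂ part true) col
  obtain ⟨hMmatch, hMrainbow⟩ := (isRainbowMatching_endOnSide_iff hbip).1 hM.1
  have hbound := hM.card_sub_mul_le (k := n) fun c => by
    have hends := (isMatchingE_iff_injOn_endOnSide hbip).1 (hcol c).1
    exact ⟨hends false, hends true, (hcol c).2⟩
  have hMn : M.card ≤ n := by
    simpa [card_image_of_injOn hMrainbow] using card_le_univ (M.image col)
  rw [Fintype.card_fin] at hbound
  exact ⟨M, hMmatch, hMrainbow, sub_sqrt_le_of_sub_mul_le hMn hbound⟩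
end
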